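/- Let ρ ∈ ℂ with arg ρ ∈ (0, π/n) for some n ≥ 2, and suppose Re(ρR) = Re(ρR') for two n-th roots of unity R, R'. Then R = R'. -/

import Mathlib

/-!
If `Re (ρ R) = Re (ρ R')` for unit complex numbers `R ≠ R'`, then `ρ R R' = conj ρ`, since
`2 Re (ρ R) = ρ R + conj ρ / R`. For `n`-th roots of unity this forces `ρ ^ n` to be real,
whereas `arg ρ ∈ (0, π / n)` puts `ρ ^ n` strictly in the upper half-plane.
-/

open Complex Real ComplexConjugate

namespace Complex

theorem eq_or_mul_mul_eq_conj_of_re_mul_eq {ρ R R' : ℂ} (hR : ‖R‖ = 1) (hR' : ‖R'‖ = 1)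
    (hre : (ρ * R).re = (ρ * R').re) : R = R' ∨ ρ * (R * R') = conj ρ := by
  have hR0 : R ≠ 0 := norm_ne_zero_iff.mp (by simp [hR])
  have hR'0 : R' ≠ 0 := norm_ne_zero_iff.mp (by simp [hR'])
  have hsum : ρ * R + conj ρ * R⁻¹ = ρ * R' + conj ρ * R'⁻¹ := by
    rw [inv_eq_conj hR, inv_eq_conj hR', ← map_mul, ← map_mul, add_conj, add_conj, hre]
  have hfactor : (R - R') * (ρ * (R * R') - conj ρ) = 0 := by
    field_simp at hsum
    linear_combination hsum
  rcases mul_eq_zero.mp hfactor with h | h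
  · exact .inl (sub_eq_zero.mp h)
  · exact .inr (sub_eq_zero.mp h)

theorem im_pow_pos {ρ : ℂ} {n : ℕ} (h : n * ρ.arg ∈ Set.Ioo 0 π) : 0 < (ρ ^ n).im := by
  have hρ : ρ ≠ 0 := by
    rintro rfl
    simp at h
  rw [← norm_mul_exp_arg_mul_I ρ, mul_pow, ← ofReal_pow, ← exp_nat_mul, im_ofReal_mul,
    show (n : ℂ) * (ρ.arg * I) = ((n * ρ.arg : ℝ) : ℂ) * I by push_cast; ring,
    exp_ofReal_mul_I_im]
  exact mul_pos (pow_pos (norm_pos_iff.mpr hρ) n) (sin_pos_of_pos_of_lt_pi h.1 h.2)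

end Complex

theorem re_rho_mul_injective_on_roots_general
    (n : ℕ) (ρ : ℂ) (harg : ρ.arg ∈ Set.Ioo 0 (π / n))
    (R R' : ℂ) (hR : R ^ n = 1) (hR' : R' ^ n = 1)
    (hre : (ρ * R).re = (ρ * R').re) : R = R' := by
  have hn : 0 < n := by
    by_contra! h
    simp [Nat.le_zero.mp h] at harg
  have hnarg : n * ρ.arg ∈ Set.Ioo 0 π := by
    have hn' : (0 : ℝ) < n := by exact_mod_cast hn
    refine ⟨mul_pos hn' harg.1, ?_⟩
    rw [← lt_div_iff₀' hn']
    exact harg.2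
  refine (eq_or_mul_mul_eq_conj_of_re_mul_eq (norm_eq_one_of_pow_eq_one hR hn.ne')
    (norm_eq_one_of_pow_eq_one hR' hn.ne') hre).resolve_right fun hconj => ?_
  have hreal : conj (ρ ^ n) = ρ ^ n := by
    rw [map_pow, ← hconj, mul_pow, mul_pow, hR, hR', mul_one, mul_one]
  exact (im_pow_pos hnarg).ne' (conj_eq_iff_im.mp hreal)

/-- For ρ with arg ρ ∈ (0, π/n), the map R ↦ Re(ρR) is injective
on the n-th roots of unity. -/
theorem re_rho_mul_injective_on_roots
    (n : ℕ) (hn : 2 ≤ n) (ρ : ℂ) (harg : ρ.arg ∈ Set.Ioo 0 (π / n))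
    (R R' : ℂ) (hR : R ^ n = 1) (hR' : R' ^ n = 1)
    (hre : (ρ * R).re = (ρ * R').re) : R = R' :=
  re_rho_mul_injective_on_roots_general n ρ harg R R' hR hR' hre
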